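/- arXiv:1505.06889 — 2 statements merged into one kernel-verified Lean document; each statement's English description precedes it below -/
import Mathlib

section
/- The modified Gibbs density ρ̃(q,ξ) = exp(-βU(q))·exp(-β(ξ-γ̂)²/2), with γ̂ = βσ²/2, is a stationary solution of the Fokker–Planck equation ρ_t = ξ∇·(∇U(q)ρ) + (σ²/2)Δ_q ρ - ∂_ξ(χ(q)ρ) associated with the SDE dq = -ξ∇U(q)dt + σ dW, dξ = χ(q)dt, when χ(q) = -β⁻¹ΔU(q) + ‖∇U(q)‖². -/
open Real

/-- Partial derivative of a function on ℝⁿ in the i-th coordinate direction. -/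
noncomputable def pd {n : ℕ} (i : Fin n) (f : (Fin n → ℝ) → ℝ) (x : Fin n → ℝ) : ℝ :=
  deriv (fun t => f (Function.update x i t)) (x i)

/-- The modified Gibbs density ρ̃(q,ξ) = exp(-βU(q))exp(-β(ξ-γ̂)²/2), γ̂ = βσ²/2, is a
stationary solution of the Fokker–Planck equation
ρ_t = ξ∇·(∇U ρ) + (σ²/2)Δ_q ρ - ∂_ξ(χρ) of the adaptive Brownian dynamics
dq = -ξ∇U(q)dt + σdW, dξ = χ(q)dt, when χ = -β⁻¹ΔU + ‖∇U‖². -/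
theorem adaptive_brownian_stationary_density (n : ℕ) (β σ : ℝ) (hβ : 0 < β) (hσ : 0 < σ)
    (U : (Fin n → ℝ) → ℝ) (hU : ContDiff ℝ (⊤ : ℕ∞) U)
    (χ : (Fin n → ℝ) → ℝ)
    (hχ : ∀ q, χ q = -β⁻¹ * (∑ i, pd i (fun q' => pd i U q') q) + ∑ i, (pd i U q) ^ 2)
    (ρ : (Fin n → ℝ) → ℝ → ℝ)
    (hρ : ∀ q ξ, ρ q ξ =
      Real.exp (-β * U q) * Real.exp (-β * (ξ - β * σ ^ 2 / 2) ^ 2 / 2)) :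
    ∀ (q : Fin n → ℝ) (ξ : ℝ),
      ξ * (∑ i, pd i (fun q' => pd i U q' * ρ q' ξ) q)
        + σ ^ 2 / 2 * (∑ i, pd i (fun q' => pd i (fun q'' => ρ q'' ξ) q') q)
        - deriv (fun ξ' => χ q * ρ q ξ') ξ = 0 := by
  intro q ξ
  set γ : ℝ := β * σ ^ 2 / 2 with hγ
  set E : ℝ := Real.exp (-β * U q) with hE
  set G : ℝ := Real.exp (-β * (ξ - γ) ^ 2 / 2) with hG
  have key : ∀ i : Fin n,
      pd i (fun q' => pd i U q' * ρ q' ξ) q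
        = (pd i (fun q' => pd i U q') q - β * (pd i U q) ^ 2) * (E * G)
    ∧ pd i (fun q' => pd i (fun q'' => ρ q'' ξ) q') q
        = (-β * pd i (fun q' => pd i U q') q + β ^ 2 * (pd i U q) ^ 2) * (E * G) := by
    intro i
    set h : ℝ → ℝ := fun t => U (Function.update q i t) with hh_def
    have hupd : ContDiff ℝ (⊤ : ℕ∞) (fun t : ℝ => Function.update q i t) := by
      apply contDiff_pi.mpr
      intro j
      rcases eq_or_ne j i with rfl | hj
      · simp [Function.update_apply]; exact contDiff_id
      · simpa [Function.update_apply, hj] using contDiff_const (𝕜 := ℝ) (c := q j)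
    have hh : ContDiff ℝ (⊤ : ℕ∞) h := hU.comp hupd
    have hone : (1 : WithTop ℕ∞) ≤ ((⊤ : ℕ∞) : WithTop ℕ∞) := by exact_mod_cast le_top
    have hh2 : ContDiff ℝ ((⊤ : ℕ∞) : WithTop ℕ∞) h := hh.of_le (by simp)
    have hdh : Differentiable ℝ h := hh2.differentiable (by simp)
    have hdh' : Differentiable ℝ (deriv h) :=
      ((contDiff_infty_iff_deriv.mp hh2).2).differentiable (by simp)
    -- the i-th partial of U along the fiber is deriv h
    have factA : ∀ t : ℝ, pd i U (Function.update q i t) = deriv h t := by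
      intro t
      simp only [pd, Function.update_idem, Function.update_self, hh_def]
    have hqfix : Function.update q i (q i) = q := Function.update_eq_self i q
    have hqq : h (q i) = U q := by rw [hh_def]; simp [hqfix]
    set b : ℝ := deriv h (q i) with hb
    set a : ℝ := deriv (deriv h) (q i) with ha
    have pdU : pd i U q = b := rfl
    have pdpdU : pd i (fun q' => pd i U q') q = a := by
      have e0 : (fun t => pd i U (Function.update q i t)) = deriv h := funext factA
      show deriv (fun t => pd i U (Function.update q i t)) (q i) = a
      rw [e0]
    have Hb : HasDerivAt h b (q i) := (hdh (q i)).hasDerivAt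
    have Ha : HasDerivAt (deriv h) a (q i) := (hdh' (q i)).hasDerivAt
    have Hexp : HasDerivAt (fun t => Real.exp (-β * h t))
        (Real.exp (-β * h (q i)) * (-β * b)) (q i) := (Hb.const_mul (-β)).exp
    have hρ' : ∀ t : ℝ, ρ (Function.update q i t) ξ = Real.exp (-β * h t) * G := by
      intro t
      rw [hρ, hG, hγ, hh_def]
    constructor
    · -- first term
      have e1 : (fun t => pd i U (Function.update q i t) * ρ (Function.update q i t) ξ)
          = fun t => deriv h t * (Real.exp (-β * h t) * G) := by
        funext t; rw [factA, hρ']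
      have H : HasDerivAt (fun t => deriv h t * (Real.exp (-β * h t) * G))
          (a * (Real.exp (-β * h (q i)) * G)
            + deriv h (q i) * (Real.exp (-β * h (q i)) * (-β * b) * G)) (q i) :=
        Ha.mul (Hexp.mul_const G)
      have : pd i (fun q' => pd i U q' * ρ q' ξ) q
          = a * (Real.exp (-β * h (q i)) * G)
            + deriv h (q i) * (Real.exp (-β * h (q i)) * (-β * b) * G) := by
        show deriv (fun t => pd i U (Function.update q i t) * ρ (Function.update q i t) ξ) (q i) = _
        rw [e1]
        exact H.deriv
      rw [this, pdpdU, pdU, hqq, ← hb, ← hE]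
      ring
    · -- second term
      have inner : ∀ t : ℝ, pd i (fun q'' => ρ q'' ξ) (Function.update q i t)
          = Real.exp (-β * h t) * (-β * deriv h t) * G := by
        intro t
        have e2 : (fun s => ρ (Function.update (Function.update q i t) i s) ξ)
            = fun s => Real.exp (-β * h s) * G := by
          funext s; rw [Function.update_idem, hρ']
        have H : HasDerivAt (fun s => Real.exp (-β * h s) * G)
            (Real.exp (-β * h t) * (-β * deriv h t) * G) t :=
          (((hdh t).hasDerivAt.const_mul (-β)).exp).mul_const G
        show deriv (fun s => ρ (Function.update (Function.update q i t) i s) ξ)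
          (Function.update q i t i) = _
        rw [e2, Function.update_self]
        exact H.deriv
      have e3 : (fun t => pd i (fun q'' => ρ q'' ξ) (Function.update q i t))
          = fun t => Real.exp (-β * h t) * (-β * deriv h t) * G := funext inner
      have H : HasDerivAt (fun t => Real.exp (-β * h t) * (-β * deriv h t) * G)
          ((Real.exp (-β * h (q i)) * (-β * b) * (-β * deriv h (q i))
            + Real.exp (-β * h (q i)) * (-β * a)) * G) (q i) :=
        (Hexp.mul (Ha.const_mul (-β))).mul_const G
      have : pd i (fun q' => pd i (fun q'' => ρ q'' ξ) q') q
          = (Real.exp (-β * h (q i)) * (-β * b) * (-β * deriv h (q i))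
            + Real.exp (-β * h (q i)) * (-β * a)) * G := by
        show deriv (fun t => pd i (fun q'' => ρ q'' ξ) (Function.update q i t)) (q i) = _
        rw [e3]
        exact H.deriv
      rw [this, pdpdU, pdU, hqq, ← hb, ← hE]
      ring
  -- ξ-derivative term
  have term3 : deriv (fun ξ' => χ q * ρ q ξ') ξ = χ q * (-β * (ξ - γ)) * (E * G) := by
    have e : (fun ξ' => χ q * ρ q ξ')
        = fun ξ' => χ q * (E * Real.exp (-β * (ξ' - γ) ^ 2 / 2)) := by
      funext ξ'; rw [hρ, hγ, hE]
    have Hin : HasDerivAt (fun ξ' => -β * (ξ' - γ) ^ 2 / 2)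
        (-β * (2 * (ξ - γ) ^ 1 * 1) / 2) ξ :=
      ((((hasDerivAt_id ξ).sub_const γ).pow 2).const_mul (-β)).div_const 2
    have H : HasDerivAt (fun ξ' => χ q * (E * Real.exp (-β * (ξ' - γ) ^ 2 / 2)))
        (χ q * (E * (Real.exp (-β * (ξ - γ) ^ 2 / 2) * (-β * (2 * (ξ - γ) ^ 1 * 1) / 2)))) ξ :=
      ((Hin.exp.const_mul E).const_mul (χ q))
    rw [e, H.deriv, ← hG]
    ring
  have s1 : (∑ i, pd i (fun q' => pd i U q' * ρ q' ξ) q)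
      = ((∑ i, pd i (fun q' => pd i U q') q) - β * ∑ i, (pd i U q) ^ 2) * (E * G) := by
    rw [Finset.sum_congr rfl fun i _ => (key i).1, ← Finset.sum_mul,
      Finset.sum_sub_distrib, ← Finset.mul_sum]
  have s2 : (∑ i, pd i (fun q' => pd i (fun q'' => ρ q'' ξ) q') q)
      = (-β * (∑ i, pd i (fun q' => pd i U q') q) + β ^ 2 * ∑ i, (pd i U q) ^ 2) * (E * G) := by
    rw [Finset.sum_congr rfl fun i _ => (key i).2, ← Finset.sum_mul,
      Finset.sum_add_distrib, ← Finset.mul_sum, ← Finset.mul_sum]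
  rw [s1, s2, term3, hχ, hγ]
  field_simp
  ring
end

section
/- The extended density ρ̃(q,p,ξ) = Z⁻¹ exp(-βH(q,p))·exp(-(βμ/2)(ξ-γ̂)²), with H(q,p) = pᵀM⁻¹p/2 + U(q) and γ̂ = β(σ_F² + σ_A²)/2, is a stationary solution of the Fokker–Planck equation for the adaptive Langevin SDE system dq = M⁻¹p dt, dp = -∇U(q)dt + σ_F M^{1/2}dW - ξp dt + σ_A M^{1/2}dW_A, dξ = μ⁻¹(pᵀM⁻¹p - N_d β⁻¹)dt. -/
open Real Matrix

lemma hasDerivAt_update' {n : ℕ} (p : Fin n → ℝ) (i j : Fin n) :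
    HasDerivAt (fun t => Function.update p i t j) (if j = i then 1 else 0) (p i) := by
  simp only [Function.update_apply]
  by_cases h : j = i
  · simpa [h] using hasDerivAt_id' (p i)
  · simpa [h] using hasDerivAt_const (p i) (p j)

lemma differentiable_update_fn {n : ℕ} (q : Fin n → ℝ) (i : Fin n) :
    Differentiable ℝ (fun t => Function.update q i t : ℝ → (Fin n → ℝ)) := by
  rw [differentiable_pi]
  intro j
  simp only [Function.update_apply]
  by_cases h : j = i <;> simp [h]

lemma hasDerivAt_mulVec_update {n : ℕ} (A : Matrix (Fin n) (Fin n) ℝ) (p : Fin n → ℝ)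
    (i j : Fin n) :
    HasDerivAt (fun t => (A *ᵥ Function.update p i t) j) (A j i) (p i) := by
  have h : ∀ t, (A *ᵥ Function.update p i t) j = ∑ k, A j k * Function.update p i t k := by
    intro t; rfl
  simp only [h]
  have := HasDerivAt.fun_sum (fun k (_ : k ∈ Finset.univ) =>
    (hasDerivAt_update' p i k).const_mul (A j k))
  refine this.congr_deriv ?_
  simp [Finset.sum_ite_eq', mul_comm]

lemma hasDerivAt_quad {n : ℕ} (A : Matrix (Fin n) (Fin n) ℝ) (hA : Aᵀ = A) (p : Fin n → ℝ)
    (i : Fin n) :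
    HasDerivAt (fun t => Function.update p i t ⬝ᵥ (A *ᵥ Function.update p i t))
      (2 * (A *ᵥ p) i) (p i) := by
  have h : ∀ t, Function.update p i t ⬝ᵥ (A *ᵥ Function.update p i t)
      = ∑ k, Function.update p i t k * (A *ᵥ Function.update p i t) k := fun t => rfl
  simp only [h]
  have := HasDerivAt.fun_sum (fun k (_ : k ∈ Finset.univ) =>
    ((hasDerivAt_update' p i k).fun_mul (hasDerivAt_mulVec_update A p i k)))
  refine this.congr_deriv ?_
  have hAs : ∀ k, A k i = A i k := fun k => by
    simpa using (congrFun (congrFun hA k) i).symm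
  simp only [Function.update_self, Function.update_apply]
  rw [Finset.sum_add_distrib]
  simp only [ite_mul, one_mul, zero_mul, Finset.sum_ite_eq', Finset.mem_univ, if_true]
  rw [two_mul]
  simp only [Function.update_eq_self]
  congr 1
  · simp only [mulVec, dotProduct]
    apply Finset.sum_congr rfl
    intro k _
    rw [hAs]
    split_ifs with hk
    · subst hk; ring
    · ring

/-- The extended density ρ̃(q,p,ξ) = Z⁻¹exp(-βH(q,p))exp(-(βμ/2)(ξ-γ̂)²), with
H = pᵀM⁻¹p/2 + U(q) and γ̂ = β(σ_F²+σ_A²)/2, is a stationary solution of the Fokker–Planck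
equation of the adaptive Langevin system
dq = M⁻¹p dt, dp = -∇U dt + σ_F M^{1/2}dW - ξp dt + σ_A M^{1/2}dW_A,
dξ = μ⁻¹(pᵀM⁻¹p - N_d β⁻¹)dt, whose Fokker–Planck operator is
L†ρ = -M⁻¹p·∇_qρ + ∇U·∇_pρ + ξ∇_p·(pρ) + ((σ_F²+σ_A²)/2)Tr(M∇_p²)ρ
      - μ⁻¹(pᵀM⁻¹p - N_dβ⁻¹)∂_ξρ. -/
theorem adaptive_langevin_stationary_density (Nd : ℕ) (β μ σF σA Z : ℝ)
    (hβ : 0 < β) (hμ : 0 < μ) (hσF : 0 < σF) (hσA : 0 < σA) (hZ : 0 < Z)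
    (M : Matrix (Fin Nd) (Fin Nd) ℝ) (hM : M.PosDef)
    (U : (Fin Nd → ℝ) → ℝ) (hU : ContDiff ℝ (⊤ : ℕ∞) U)
    (H : (Fin Nd → ℝ) → (Fin Nd → ℝ) → ℝ)
    (hH : ∀ q p, H q p = p ⬝ᵥ (M⁻¹ *ᵥ p) / 2 + U q)
    (γ : ℝ) (hγ : γ = β * (σF ^ 2 + σA ^ 2) / 2)
    (ρ : (Fin Nd → ℝ) → (Fin Nd → ℝ) → ℝ → ℝ)
    (hρ : ∀ q p ξ, ρ q p ξ =
      Z⁻¹ * Real.exp (-β * H q p) * Real.exp (-(β * μ / 2) * (ξ - γ) ^ 2)) :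
    ∀ (q p : Fin Nd → ℝ) (ξ : ℝ),
      -(∑ i, (M⁻¹ *ᵥ p) i * pd i (fun q' => ρ q' p ξ) q)
        + (∑ i, pd i U q * pd i (fun p' => ρ q p' ξ) p)
        + ξ * (∑ i, pd i (fun p' => p' i * ρ q p' ξ) p)
        + ((σF ^ 2 + σA ^ 2) / 2) *
            (∑ i, ∑ j, M i j * pd i (fun p' => pd j (fun p'' => ρ q p'' ξ) p') p)
        - μ⁻¹ * (p ⬝ᵥ (M⁻¹ *ᵥ p) - Nd * β⁻¹) * deriv (fun ξ' => ρ q p ξ') ξ = 0 := by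
  intro q p ξ
  set A := M⁻¹ with hA
  have hMsym : Mᵀ = M := by
    have := hM.1.eq
    simpa [Matrix.conjTranspose_eq_transpose_of_trivial] using this
  have hAsym : Aᵀ = A := by
    rw [hA, Matrix.transpose_nonsing_inv, hMsym]
  have hMdet : IsUnit M.det := (hM.det_pos.ne').isUnit
  have hMA : M * A = 1 := Matrix.mul_nonsing_inv M hMdet
  -- derivative in q
  have hdq : ∀ i, pd i (fun q' => ρ q' p ξ) q = -β * pd i U q * ρ q p ξ := by
    intro i
    have hu : HasDerivAt (fun t => U (Function.update q i t)) (pd i U q) (q i) := by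
      have hd : DifferentiableAt ℝ (fun t => U (Function.update q i t)) (q i) :=
        ((hU.differentiable (by simp)).comp (differentiable_update_fn q i)) (q i)
      simpa [pd] using hd.hasDerivAt
    have h1 : HasDerivAt (fun t => ρ (Function.update q i t) p ξ)
        (-β * pd i U q * ρ q p ξ) (q i) := by
      simp only [hρ, hH]
      have h2 := ((((hu.const_add (p ⬝ᵥ (A *ᵥ p) / 2)).const_mul (-β)).exp).const_mul
        Z⁻¹).mul_const (Real.exp (-(β * μ / 2) * (ξ - γ) ^ 2))
      refine h2.congr_deriv ?_
      simp only [hρ, hH, Function.update_eq_self]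
      ring
    rw [pd, h1.deriv]
  -- derivative in p (at arbitrary point)
  have hdp : ∀ (p' : Fin Nd → ℝ) (i : Fin Nd),
      HasDerivAt (fun t => ρ q (Function.update p' i t) ξ)
        (-β * (A *ᵥ p') i * ρ q p' ξ) (p' i) := by
    intro p' i
    simp only [hρ, hH]
    have h2 := (((((hasDerivAt_quad A hAsym p' i).div_const 2).add_const
      (U q)).const_mul (-β)).exp.const_mul Z⁻¹).mul_const
      (Real.exp (-(β * μ / 2) * (ξ - γ) ^ 2))
    refine h2.congr_deriv ?_
    simp only [Function.update_eq_self]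
    ring
  have hpdp : ∀ (p' : Fin Nd → ℝ) (j : Fin Nd),
      pd j (fun p'' => ρ q p'' ξ) p' = -β * (A *ᵥ p') j * ρ q p' ξ := by
    intro p' j
    rw [pd, (hdp p' j).deriv]
  -- second derivative in p
  have hpd2 : ∀ i j, pd i (fun p' => pd j (fun p'' => ρ q p'' ξ) p') p
      = -β * A j i * ρ q p ξ + (-β * (A *ᵥ p) j) * (-β * (A *ᵥ p) i * ρ q p ξ) := by
    intro i j
    rw [pd]
    simp only [hpdp]
    have h1 := (((hasDerivAt_mulVec_update A p i j).const_mul (-β)).fun_mul (hdp p i))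
    simp only [Function.update_eq_self] at h1
    rw [h1.deriv]
  -- term 3
  have hpd3 : ∀ i, pd i (fun p' => p' i * ρ q p' ξ) p
      = ρ q p ξ + p i * (-β * (A *ᵥ p) i * ρ q p ξ) := by
    intro i
    rw [pd]
    have h1 := (hasDerivAt_id' (p i)).fun_mul (hdp p i)
    simp only [Function.update_eq_self, id_eq] at h1
    have heq : (fun t => Function.update p i t i * ρ q (Function.update p i t) ξ)
        = fun t => t * ρ q (Function.update p i t) ξ := by
      funext t; rw [Function.update_self]
    rw [heq, h1.deriv]
    ring
  -- xi derivative
  have hxi : deriv (fun ξ' => ρ q p ξ') ξ = -(β * μ) * (ξ - γ) * ρ q p ξ := by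
    have h1 : HasDerivAt (fun ξ' => ρ q p ξ') (-(β * μ) * (ξ - γ) * ρ q p ξ) ξ := by
      simp only [hρ]
      have h2 := (((((hasDerivAt_id ξ).sub_const γ).pow 2).const_mul
        (-(β * μ / 2))).exp).const_mul (Z⁻¹ * Real.exp (-β * H q p))
      refine h2.congr_deriv ?_
      simp only [id_eq, Pi.pow_apply]
      ring
    rw [h1.deriv]
  -- substitute everything
  simp only [hpd2]
  simp only [hdq, hpdp, hpd3, hxi]
  set r := ρ q p ξ with hr
  set v := A *ᵥ p with hv
  have hK : p ⬝ᵥ v = ∑ i, p i * v i := rfl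
  have hMv : M *ᵥ v = p := by
    rw [hv, Matrix.mulVec_mulVec, hMA, Matrix.one_mulVec]
  -- sum computations
  have e1 : ∑ i, v i * (-β * pd i U q * r) = -β * r * ∑ i, v i * pd i U q := by
    rw [Finset.mul_sum]; apply Finset.sum_congr rfl; intro i _; ring
  have e2 : ∑ i, pd i U q * (-β * v i * r) = -β * r * ∑ i, v i * pd i U q := by
    rw [Finset.mul_sum]; apply Finset.sum_congr rfl; intro i _; ring
  have e3 : ∑ i, (r + p i * (-β * v i * r)) = Nd * r - β * r * (p ⬝ᵥ v) := by
    have h : ∀ i, r + p i * (-β * v i * r) = r - β * r * (p i * v i) := fun i => by ring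
    simp only [h, Finset.sum_sub_distrib, Finset.sum_const, Finset.card_univ,
      Fintype.card_fin, nsmul_eq_mul, hK, Finset.mul_sum]
  have etr : ∑ i, ∑ j, M i j * A j i = (Nd : ℝ) := by
    have : ∀ i, ∑ j, M i j * A j i = (M * A) i i := fun i => rfl
    simp only [this, hMA, Matrix.one_apply_eq]
    simp
  have equad : ∑ i, ∑ j, M i j * (v j * v i) = p ⬝ᵥ v := by
    have h1 : ∀ i, ∑ j, M i j * (v j * v i) = (M *ᵥ v) i * v i := by
      intro i
      simp only [mulVec, dotProduct, Finset.sum_mul]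
      apply Finset.sum_congr rfl; intro j _; ring
    simp only [h1, hMv, hK]
  have e4 : ∑ i, ∑ j, M i j * (-β * A j i * r + (-β * v j) * (-β * v i * r))
      = -β * r * Nd + β ^ 2 * r * (p ⬝ᵥ v) := by
    have h1 : ∀ i j, M i j * (-β * A j i * r + (-β * v j) * (-β * v i * r))
        = (-β * r) * (M i j * A j i) + (β ^ 2 * r) * (M i j * (v j * v i)) := by
      intro i j; ring
    simp only [h1, Finset.sum_add_distrib, ← Finset.mul_sum, etr, equad]
  rw [e1, e2, e3, e4]
  rw [hγ]
  have hβ' : β ≠ 0 := hβ.ne'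
  have hμ' : μ ≠ 0 := hμ.ne'
  field_simp
  ring
end
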